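/- Let G be the graph of a medium (S, T) (vertices are states, edges join pairs of states related by a token). If m = τ₁…τₘ is a concise message producing state Q from state P, then the sequence of intermediate states P = P₀, P₁, …, Pₘ = Q with Pᵢ = Pτ₁⋯τᵢ is a shortest path from P to Q in G. Conversely, every shortest path from P to Q in G arises from a concise message producing Q from P. -/

import Mathlib

variable {S : Type*}

/-- Result of applying message `m` (a list of tokens) to state `P`. -/
def mApply (m : List (S → S)) (P : S) : S := m.foldl (fun s τ => τ s) P

/-- `τ'` is a reverse of `τ`. -/
def IsReverse (τ τ' : S → S) : Prop := ∀ P Q : S, P ≠ Q → (τ P = Q ↔ τ' Q = P)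

/-- `(S, T)` is a token system. -/
def IsTokenSystem (T : Set (S → S)) : Prop :=
  Nontrivial S ∧ T.Nonempty ∧ ∀ τ ∈ T, τ ≠ id

/-- `m` is a message of the token system with token set `T`. -/
def IsMsg (T : Set (S → S)) (m : List (S → S)) : Prop := ∀ τ ∈ m, τ ∈ T

/-- `m` is stepwise effective for `P`. -/
def StepwiseEff : List (S → S) → S → Prop
  | [], _ => True
  | τ :: rest, P => τ P ≠ P ∧ StepwiseEff rest (τ P)

/-- `m` is consistent: it contains no token together with a reverse of it. -/
def Consistent (m : List (S → S)) : Prop :=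
  ∀ τ ∈ m, ∀ τ' ∈ m, ¬ IsReverse τ τ'

/-- `m` is concise for `P`. -/
def Concise (T : Set (S → S)) (m : List (S → S)) (P : S) : Prop :=
  IsMsg T m ∧ Consistent m ∧ StepwiseEff m P ∧ m.Nodup

/-- `m` is a return message for `P`. -/
def IsReturn (m : List (S → S)) (P : S) : Prop :=
  StepwiseEff m P ∧ mApply m P = P

/-- `m` is vacuous: its indices partition into pairs of mutually reverse tokens. -/
def Vacuous (m : List (S → S)) : Prop :=
  ∃ σ : Equiv.Perm (Fin m.length),
    (∀ i, σ i ≠ i) ∧ (∀ i, σ (σ i) = i) ∧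
    ∀ i, IsReverse (m.get i) (m.get (σ i))

/-- `(S, T)` is a medium: token system satisfying [Ma] and [Mb]. -/
def IsMedium (T : Set (S → S)) : Prop :=
  IsTokenSystem T ∧
  (∀ P Q : S, P ≠ Q → ∃ m, Concise T m P ∧ mApply m P = Q) ∧
  (∀ (m : List (S → S)) (P : S), IsMsg T m → IsReturn m P → Vacuous m)

/-- Content of a message: its set of tokens. -/
def msgContent (m : List (S → S)) : Set (S → S) := {τ | τ ∈ m}

/-- Token content of a state `P`. -/
def SContent (T : Set (S → S)) (P : S) : Set (S → S) :=
  {τ | ∃ (V : S) (m : List (S → S)), Concise T m V ∧ mApply m V = P ∧ τ ∈ m}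

/-- `mr` is the reverse message `τ̃ₙ…τ̃₁` of `m = τ₁…τₙ`. -/
def IsReverseOfMsg (m mr : List (S → S)) : Prop :=
  List.Forall₂ (fun τ τ' => IsReverse τ τ' ∧ IsReverse τ' τ) m mr.reverse

/-- The graph of a medium: states are vertices, token-adjacent states are joined. -/
def mediumGraph (T : Set (S → S)) : SimpleGraph S where
  Adj P Q := P ≠ Q ∧ ∃ τ ∈ T, τ P = Q ∨ τ Q = P
  symm := by
    constructor
    rintro P Q ⟨h, τ, hτ, hor⟩
    exact ⟨h.symm, τ, hτ, hor.symm⟩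
  loopless := by
    constructor
    rintro P ⟨h, -⟩
    exact h rfl

variable {V : Type*}

/-- The like relation on arcs of a graph:
`ab L cd` iff `d(a,c) + 1 = d(b,d) + 1 = d(a,d) = d(b,c)`. -/
def Like (G : SimpleGraph V) (a b c d : V) : Prop :=
  G.Adj a b ∧ G.Adj c d ∧
    G.dist a c + 1 = G.dist b d + 1 ∧ G.dist b d + 1 = G.dist a d ∧
    G.dist a d = G.dist b c

/-- A graph is mediatic if it is connected, bipartite, and its like relation is transitive. -/
def IsMediatic (G : SimpleGraph V) : Prop :=
  G.Connected ∧ G.Colorable 2 ∧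
    ∀ a b c d e f : V, Like G a b c d → Like G c d e f → Like G a b e f

/-!
A shortest walk from `P` to `Q` reads off as a stepwise effective message `m` of length
`dist P Q`. If `c` is a concise message from `P` to `Q` and `c̃` its reverse, then `m c̃` is a
return message, hence vacuous by [Mb]. Since `c̃` is consistent, each token of `c̃` is paired with
a reverse in `m`, and reverses are unique, so every token of `c` occurs in `m`. As `c` has no
repeated tokens, `c` embeds into `m` up to permutation: `|c| ≤ |m|`, and when the lengths agree
`m` is a permutation of `c`, hence concise.
-/

section Medium

variable {T : Set (S → S)}

lemma mApply_cons (τ : S → S) (m : List (S → S)) (P : S) :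
    mApply (τ :: m) P = mApply m (τ P) := rfl

lemma mApply_append (a b : List (S → S)) (P : S) :
    mApply (a ++ b) P = mApply b (mApply a P) := by
  simp [mApply, List.foldl_append]

lemma stepwiseEff_append {a b : List (S → S)} {P : S} :
    StepwiseEff (a ++ b) P ↔ StepwiseEff a P ∧ StepwiseEff b (mApply a P) := by
  induction a generalizing P with
  | nil => simp [StepwiseEff, mApply]
  | cons τ rest ih => simp only [List.cons_append, StepwiseEff, mApply_cons, ih, and_assoc]

lemma isMsg_cons {τ : S → S} {m : List (S → S)} : IsMsg T (τ :: m) ↔ τ ∈ T ∧ IsMsg T m := by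
  simp [IsMsg]

lemma IsReverse.symm {τ τ' : S → S} (h : IsReverse τ τ') : IsReverse τ' τ :=
  fun P Q hPQ => (h Q P hPQ.symm).symm

lemma IsReverse.eq_of_isReverse {τ τ' ρ : S → S} (h : IsReverse τ ρ) (h' : IsReverse τ' ρ) :
    τ = τ' := by
  have agree : ∀ P Q, P ≠ Q → (τ P = Q ↔ τ' P = Q) :=
    fun P Q hPQ => (h P Q hPQ).trans (h' P Q hPQ).symm
  funext x
  by_cases hx : τ x = x
  · by_contra hne
    exact hne ((agree x (τ' x) fun e => hne (hx.trans e)).mpr rfl)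
  · exact ((agree x (τ x) (Ne.symm hx)).mp rfl).symm

lemma Consistent.of_forall_exists_isReverse {c cr : List (S → S)} (hc : Consistent c)
    (hcov : ∀ ρ ∈ cr, ∃ τ ∈ c, IsReverse τ ρ) : Consistent cr := by
  intro a ha b hb hab
  obtain ⟨x, hx, hxa⟩ := hcov a ha
  obtain ⟨y, hy, hyb⟩ := hcov b hb
  exact hc x hx y hy fun P Q hPQ =>
    (hxa P Q hPQ).trans ((hab Q P hPQ.symm).trans (hyb Q P hPQ.symm).symm)

lemma Concise.of_perm {c m : List (S → S)} {P : S} (hc : Concise T c P) (hcm : c.Perm m)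
    (hse : StepwiseEff m P) : Concise T m P :=
  ⟨fun τ hτ => hc.1 τ (hcm.symm.subset hτ),
    fun τ hτ τ' hτ' => hc.2.1 τ (hcm.symm.subset hτ) τ' (hcm.symm.subset hτ'),
    hse, hcm.nodup_iff.mp hc.2.2.2⟩

lemma Vacuous.exists_isReverse {m : List (S → S)} (h : Vacuous m) {ρ : S → S} (hρ : ρ ∈ m) :
    ∃ τ ∈ m, IsReverse ρ τ := by
  obtain ⟨σ, -, -, hσ⟩ := h
  obtain ⟨i, rfl⟩ := List.mem_iff_get.mp hρ
  exact ⟨_, List.get_mem _ _, hσ i⟩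

lemma Vacuous.exists_isReverse_left {m r : List (S → S)} (hv : Vacuous (m ++ r))
    (hr : Consistent r) {ρ : S → S} (hρ : ρ ∈ r) : ∃ τ ∈ m, IsReverse τ ρ := by
  obtain ⟨τ, hτ, hrev⟩ := hv.exists_isReverse (List.mem_append_right m hρ)
  rcases List.mem_append.mp hτ with hτm | hτr
  · exact ⟨τ, hτm, hrev.symm⟩
  · exact absurd hrev (hr ρ hρ τ hτr)

lemma mediumGraph_adj_of_ne {τ : S → S} (hτ : τ ∈ T) {P : S} (h : τ P ≠ P) :
    (mediumGraph T).Adj P (τ P) :=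
  ⟨Ne.symm h, τ, hτ, Or.inl rfl⟩

lemma mediumGraph_adj_mApply_take {m : List (S → S)} {P : S} (hm : IsMsg T m)
    (hse : StepwiseEff m P) {i : ℕ} (hi : i < m.length) :
    (mediumGraph T).Adj (mApply (m.take i) P) (mApply (m.take (i + 1)) P) := by
  induction m generalizing P i with
  | nil => simp at hi
  | cons τ rest ih =>
    obtain ⟨hτ, hrest⟩ := isMsg_cons.mp hm
    cases i with
    | zero => exact mediumGraph_adj_of_ne hτ hse.1
    | succ i => exact ih hrest hse.2 (by simpa using hi)

lemma exists_walk_of_stepwiseEff {m : List (S → S)} {P : S} (hm : IsMsg T m)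
    (hse : StepwiseEff m P) : ∃ w : (mediumGraph T).Walk P (mApply m P), w.length = m.length := by
  induction m generalizing P with
  | nil => exact ⟨.nil, rfl⟩
  | cons τ rest ih =>
    obtain ⟨hτ, hrest⟩ := isMsg_cons.mp hm
    obtain ⟨w, hw⟩ := ih hrest hse.2
    exact ⟨.cons (mediumGraph_adj_of_ne hτ hse.1) w, congrArg (· + 1) hw⟩

namespace IsMedium

lemma exists_isReverse (hM : IsMedium T) {τ : S → S} (hτ : τ ∈ T) {A : S} (hA : τ A ≠ A) :
    ∃ τ' ∈ T, IsReverse τ τ' := by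
  obtain ⟨c, hc, hcA⟩ := hM.2.1 (τ A) A hA
  have hmsg : IsMsg T (τ :: c) := isMsg_cons.mpr ⟨hτ, hc.1⟩
  have hret : IsReturn (τ :: c) A := ⟨⟨hA, hc.2.2.1⟩, hcA⟩
  obtain ⟨τ', hτ', hrev⟩ := (hM.2.2 _ A hmsg hret).exists_isReverse List.mem_cons_self
  exact ⟨τ', hmsg τ' hτ', hrev⟩

lemma exists_concise (hM : IsMedium T) (P Q : S) : ∃ c, Concise T c P ∧ mApply c P = Q := by
  by_cases hPQ : P = Q
  · exact ⟨[], ⟨by simp [IsMsg], by simp [Consistent], trivial, List.nodup_nil⟩, hPQ⟩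
  · exact hM.2.1 P Q hPQ

lemma exists_reverse_msg (hM : IsMedium T) {m : List (S → S)} {P : S} (hm : IsMsg T m)
    (hse : StepwiseEff m P) :
    ∃ mr, IsMsg T mr ∧ StepwiseEff mr (mApply m P) ∧ mApply mr (mApply m P) = P ∧
      (∀ τ ∈ m, ∃ ρ ∈ mr, IsReverse τ ρ) ∧ (∀ ρ ∈ mr, ∃ τ ∈ m, IsReverse τ ρ) := by
  induction m generalizing P with
  | nil => exact ⟨[], by simp [IsMsg], trivial, rfl, by simp, by simp⟩
  | cons τ rest ih =>
    obtain ⟨hτ, hrest⟩ := isMsg_cons.mp hm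
    obtain ⟨hτP, hse'⟩ := hse
    obtain ⟨mr, hmr, hse_mr, hmrP, hcov, hcov'⟩ := ih hrest hse'
    obtain ⟨τ', hτ', hrev⟩ := hM.exists_isReverse hτ hτP
    have hback : τ' (τ P) = P := (hrev P (τ P) (Ne.symm hτP)).mp rfl
    refine ⟨mr ++ [τ'], ?_, ?_, ?_, ?_, ?_⟩
    · intro ρ hρ
      rcases List.mem_append.mp hρ with h | h
      · exact hmr ρ h
      · exact List.mem_singleton.mp h ▸ hτ'
    · rw [mApply_cons, stepwiseEff_append, hmrP]
      exact ⟨hse_mr, by rw [hback]; exact Ne.symm hτP, trivial⟩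
    · rw [mApply_cons, mApply_append, hmrP]
      exact hback
    · rintro σ (_ | ⟨_, hσ⟩)
      · exact ⟨τ', List.mem_append_right _ (List.mem_singleton_self _), hrev⟩
      · obtain ⟨ρ, hρ, hσρ⟩ := hcov σ hσ
        exact ⟨ρ, List.mem_append_left _ hρ, hσρ⟩
    · intro ρ hρ
      rcases List.mem_append.mp hρ with h | h
      · obtain ⟨σ, hσ, hσρ⟩ := hcov' ρ h
        exact ⟨σ, List.mem_cons_of_mem _ hσ, hσρ⟩
      · exact ⟨τ, List.mem_cons_self, List.mem_singleton.mp h ▸ hrev⟩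

lemma subperm_of_concise (hM : IsMedium T) {m c : List (S → S)} {P : S} (hm : IsMsg T m)
    (hse : StepwiseEff m P) (hc : Concise T c P) (hmc : mApply m P = mApply c P) :
    c.Subperm m := by
  obtain ⟨hcT, hcons, hcse, hnodup⟩ := hc
  obtain ⟨cr, hcr, hcr_se, hcr_back, hcov, hcov'⟩ := hM.exists_reverse_msg hcT hcse
  have hret : IsReturn (m ++ cr) P :=
    ⟨stepwiseEff_append.mpr ⟨hse, hmc ▸ hcr_se⟩, by rw [mApply_append, hmc, hcr_back]⟩
  have hv : Vacuous (m ++ cr) :=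
    hM.2.2 _ P (fun τ hτ => (List.mem_append.mp hτ).elim (hm τ) (hcr τ)) hret
  refine List.subperm_of_subset hnodup fun τ hτ => ?_
  obtain ⟨ρ, hρ, hτρ⟩ := hcov τ hτ
  obtain ⟨τ', hτ', hτ'ρ⟩ :=
    hv.exists_isReverse_left (hcons.of_forall_exists_isReverse hcov') hρ
  exact hτρ.eq_of_isReverse hτ'ρ ▸ hτ'

lemma exists_token_of_adj (hM : IsMedium T) {A B : S} (h : (mediumGraph T).Adj A B) :
    ∃ τ ∈ T, τ A = B := by
  obtain ⟨hne, τ, hτ, hAB | hBA⟩ := h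
  · exact ⟨τ, hτ, hAB⟩
  · obtain ⟨τ', hτ', hrev⟩ := hM.exists_isReverse hτ (hBA.trans_ne hne)
    exact ⟨τ', hτ', (hrev B A hne.symm).mp hBA⟩

lemma exists_msg_of_walk (hM : IsMedium T) {P Q : S} (w : (mediumGraph T).Walk P Q) :
    ∃ m, IsMsg T m ∧ StepwiseEff m P ∧ mApply m P = Q ∧ m.length = w.length ∧
      ∀ i ≤ w.length, w.getVert i = mApply (m.take i) P := by
  induction w with
  | nil => exact ⟨[], by simp [IsMsg], trivial, rfl, rfl, fun i hi => by simp [mApply]⟩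
  | @cons A B C hAB w ih =>
    obtain ⟨m, hm, hse, hmC, hlen, hvert⟩ := ih
    obtain ⟨τ, hτ, rfl⟩ := hM.exists_token_of_adj hAB
    refine ⟨τ :: m, isMsg_cons.mpr ⟨hτ, hm⟩, ⟨hAB.ne.symm, hse⟩, hmC, by simp [hlen], ?_⟩
    rintro (_ | i) hi
    · rfl
    · exact hvert i (by simpa using hi)

lemma length_eq_dist_of_concise (hM : IsMedium T) {c : List (S → S)} {P : S}
    (hc : Concise T c P) : c.length = (mediumGraph T).dist P (mApply c P) := by
  obtain ⟨w, hw⟩ := exists_walk_of_stepwiseEff hc.1 hc.2.2.1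
  obtain ⟨w', hw'⟩ := SimpleGraph.Reachable.exists_walk_length_eq_dist ⟨w⟩
  obtain ⟨m, hm, hse, hmQ, hlen, -⟩ := hM.exists_msg_of_walk w'
  have hcm := (hM.subperm_of_concise hm hse hc hmQ).length_le
  have hdist := hw ▸ SimpleGraph.dist_le w
  omega

end IsMedium

end Medium

/-- Concise messages correspond to shortest paths in the graph of a medium. -/
theorem stmt12 {T : Set (S → S)} (hM : IsMedium T) (P Q : S) :
    (∀ m : List (S → S), Concise T m P → mApply m P = Q →
      (∀ i < m.length,
        (mediumGraph T).Adj (mApply (m.take i) P) (mApply (m.take (i + 1)) P)) ∧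
      m.length = (mediumGraph T).dist P Q) ∧
    (∀ w : (mediumGraph T).Walk P Q, w.IsPath → w.length = (mediumGraph T).dist P Q →
      ∃ m : List (S → S), Concise T m P ∧ mApply m P = Q ∧ m.length = w.length ∧
        ∀ i ≤ w.length, w.getVert i = mApply (m.take i) P) := by
  refine ⟨fun m hc hQ => ⟨fun i hi => mediumGraph_adj_mApply_take hc.1 hc.2.2.1 hi,
    hQ ▸ hM.length_eq_dist_of_concise hc⟩, fun w _ hw => ?_⟩
  obtain ⟨m, hm, hse, hmQ, hlen, hvert⟩ := hM.exists_msg_of_walk w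
  obtain ⟨c, hc, hcQ⟩ := hM.exists_concise P Q
  have hcm : c.length = m.length := by rw [hM.length_eq_dist_of_concise hc, hcQ, hlen, hw]
  have hperm := (hM.subperm_of_concise hm hse hc (hmQ.trans hcQ.symm)).perm_of_length_le hcm.ge
  exact ⟨m, hc.of_perm hperm hse, hmQ, hlen, hvert⟩
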